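/- Let m ≥ 2, 0 ≤ s ≤ m, let I, J ⊆ ℝ be open intervals, and let z : I → ℝ^{m+1} and w : J → ℝ^{m+1} be three times continuously differentiable curves. Define L(x,y) = (z(x)+w(y))·tanh((x+y)/√2) − (z'(x)+w'(y))/√2 on I × J and assume, with the bilinear form of index s+1 on ℝ^{m+1}: (iii.1) ⟨L(x,y), L(x,y)⟩_{s+1} = −1 for all (x,y); (iii.2) √2·⟨z(x)+w(y), 2z'(x)−z'''(x)⟩_{s+1}·tanh((x+y)/√2) = ⟨z'(x)+w'(y), 2z'(x)−z'''(x)⟩_{s+1} for all (x,y); and (iii.3) √2·⟨z(x)+w(y), 2w'(y)−w'''(y)⟩_{s+1}·tanh((x+y)/√2) = ⟨z'(x)+w'(y), 2w'(y)−w'''(y)⟩_{s+1} for all (x,y). Then on I × J: ⟨∂L/∂x, ∂L/∂x⟩_{s+1} = 0, ⟨∂L/∂y, ∂L/∂y⟩_{s+1} = 0, ⟨∂L/∂x, ∂L/∂y⟩_{s+1} = −sech²((x+y)/√2), and ∂²L/∂x∂y = −sech²((x+y)/√2)·L. (This is the converse part of case (iii) of Theorem 6.1: such an L defines a minimal Lorentz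 surface of constant curvature −1 in the pseudo-hyperbolic space H^m_s(−1).) -/

import Mathlib

noncomputable def pform (s n : ℕ) (u v : Fin n → ℝ) : ℝ :=
  ∑ i : Fin n, (if (i : ℕ) < s then -(u i * v i) else u i * v i)

noncomputable def pd1 {E : Type*} [NormedAddCommGroup E] [NormedSpace ℝ E]
    (L : ℝ → ℝ → E) (x y : ℝ) : E :=
  deriv (fun t => L t y) x

noncomputable def pd2 {E : Type*} [NormedAddCommGroup E] [NormedSpace ℝ E]
    (L : ℝ → ℝ → E) (x y : ℝ) : E :=
  deriv (fun t => L x t) y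

noncomputable def sech (t : ℝ) : ℝ := 1 / Real.cosh t

/-!
Differentiating `⟨L, L⟩ = -1` gives `⟨L_x, L⟩ = 0`. A direct computation gives
`L_xy = -sech² · L` and `L_xx = -√2 tanh · L_x + (2 z' - z''') / √2`, while (iii.2) says precisely
that `⟨L, 2 z' - z'''⟩ = 0`. Differentiating `⟨L_x, L⟩ = 0` in `y` therefore gives
`⟨L_x, L_y⟩ = sech² ⟨L, L⟩ = -sech²`, and differentiating it in `x` gives
`⟨L_x, L_x⟩ = -⟨L_xx, L⟩ = 0`. The claim about `L_y` follows from the symmetry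
`L_{z,w}(x, y) = L_{w,z}(y, x)` and (iii.3).
-/

open Real Filter Topology

lemma HasDerivAt.tanh {f : ℝ → ℝ} {f' a : ℝ} (hf : HasDerivAt f f' a) :
    HasDerivAt (fun t => tanh (f t)) ((1 - tanh (f a) ^ 2) * f') a := by
  have hc : Real.cosh (f a) ≠ 0 := (cosh_pos _).ne'
  simp only [Real.tanh_eq_sinh_div_cosh]
  refine (hf.sinh.div hf.cosh hc).congr_deriv ?_
  field_simp

lemma sech_sq (x : ℝ) : sech x ^ 2 = 1 - tanh x ^ 2 := by
  have hc : cosh x ≠ 0 := (cosh_pos x).ne'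
  rw [sech, tanh_eq_sinh_div_cosh]
  field_simp
  linarith [cosh_sq_sub_sinh_sq x]

lemma ContDiffOn.differentiableAt_iterate_deriv {E : Type*} [NormedAddCommGroup E]
    [NormedSpace ℝ E] {f : ℝ → E} {U : Set ℝ} {k j : ℕ} (hf : ContDiffOn ℝ k f U)
    (hU : IsOpen U) (hj : j < k) {a : ℝ} (ha : a ∈ U) : DifferentiableAt ℝ (deriv^[j] f) a := by
  induction j generalizing f k with
  | zero => exact (hf.differentiableOn (by norm_cast; omega)).differentiableAt (hU.mem_nhds ha)
  | succ j ih =>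
    obtain ⟨k, rfl⟩ : ∃ k', k = k' + 1 := ⟨k - 1, by omega⟩
    exact ih (hf.deriv_of_isOpen hU (by norm_cast)) (by omega)

section Pform

variable {s n : ℕ}

lemma pform_comm (u v : Fin n → ℝ) : pform s n u v = pform s n v u := by
  simp only [pform]
  refine Finset.sum_congr rfl fun i _ => ?_
  rw [mul_comm]

lemma pform_add_left (u u' v : Fin n → ℝ) :
    pform s n (u + u') v = pform s n u v + pform s n u' v := by
  simp only [pform, ← Finset.sum_add_distrib, Pi.add_apply]
  refine Finset.sum_congr rfl fun i _ => ?_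
  split_ifs <;> ring

lemma pform_sub_left (u u' v : Fin n → ℝ) :
    pform s n (u - u') v = pform s n u v - pform s n u' v := by
  simp only [pform, ← Finset.sum_sub_distrib, Pi.sub_apply]
  refine Finset.sum_congr rfl fun i _ => ?_
  split_ifs <;> ring

lemma pform_smul_left (c : ℝ) (u v : Fin n → ℝ) :
    pform s n (c • u) v = c * pform s n u v := by
  simp only [pform, Finset.mul_sum, Pi.smul_apply, smul_eq_mul]
  refine Finset.sum_congr rfl fun i _ => ?_
  split_ifs <;> ring

lemma HasDerivAt.pform {f g : ℝ → Fin n → ℝ} {f' g' : Fin n → ℝ} {a : ℝ}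
    (hf : HasDerivAt f f' a) (hg : HasDerivAt g g' a) :
    HasDerivAt (fun t => pform s n (f t) (g t)) (pform s n f' (g a) + pform s n (f a) g') a := by
  simp only [_root_.pform, ← Finset.sum_add_distrib]
  refine HasDerivAt.fun_sum fun i _ => ?_
  have hi := (hasDerivAt_pi.1 hf i).mul (hasDerivAt_pi.1 hg i)
  by_cases h : (i : ℕ) < s
  · simp only [h, if_true]
    exact hi.neg.congr_deriv (neg_add _ _)
  · simp only [h, if_false]
    exact hi

lemma pform_add_pform_eq_zero_of_eventually_const {f g : ℝ → Fin n → ℝ} {f' g' : Fin n → ℝ}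
    {a c : ℝ} (hf : HasDerivAt f f' a) (hg : HasDerivAt g g' a)
    (hc : ∀ᶠ t in 𝓝 a, pform s n (f t) (g t) = c) :
    pform s n f' (g a) + pform s n (f a) g' = 0 :=
  (hf.pform hg).unique ((hasDerivAt_const a c).congr_of_eventuallyEq hc)

end Pform

section Surface

variable {E : Type*} [NormedAddCommGroup E] [NormedSpace ℝ E]

noncomputable def surfaceMap (z w : ℝ → E) (x y : ℝ) : E :=
  tanh ((x + y) / √2) • (z x + w y) - (√2)⁻¹ • (deriv z x + deriv w y)

/-- `∂L/∂x` in closed form, with `1 - tanh²` for `sech²`; `∂L/∂y` is `surfaceMapDx w z y x`. -/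
noncomputable def surfaceMapDx (z w : ℝ → E) (x y : ℝ) : E :=
  ((√2)⁻¹ * (1 - tanh ((x + y) / √2) ^ 2)) • (z x + w y) + tanh ((x + y) / √2) • deriv z x
    - (√2)⁻¹ • deriv (deriv z) x

lemma surfaceMap_comm (z w : ℝ → E) (x y : ℝ) : surfaceMap w z y x = surfaceMap z w x y := by
  simp only [surfaceMap, add_comm]

lemma hasDerivAt_surfaceMap_fst {z : ℝ → E} {a : ℝ} (w : ℝ → E) (b : ℝ)
    (hz : DifferentiableAt ℝ z a) (hz' : DifferentiableAt ℝ (deriv z) a) :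
    HasDerivAt (surfaceMap z w · b) (surfaceMapDx z w a b) a := by
  have hτ := (((hasDerivAt_id' a).add_const b).div_const √2).tanh
  have h := (hτ.smul (hz.hasDerivAt.add_const (w b))).sub
    ((hz'.hasDerivAt.add_const (deriv w b)).const_smul (√2)⁻¹)
  refine h.congr_deriv ?_
  simp only [surfaceMapDx]
  module

lemma hasDerivAt_surfaceMap_snd (z : ℝ → E) (a : ℝ) {w : ℝ → E} {b : ℝ}
    (hw : DifferentiableAt ℝ w b) (hw' : DifferentiableAt ℝ (deriv w) b) :
    HasDerivAt (surfaceMap z w a ·) (surfaceMapDx w z b a) b := by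
  simpa only [surfaceMap_comm] using hasDerivAt_surfaceMap_fst z a hw hw'

lemma hasDerivAt_surfaceMapDx_fst {z : ℝ → E} {a : ℝ} (w : ℝ → E) (b : ℝ)
    (hz : DifferentiableAt ℝ z a) (hz' : DifferentiableAt ℝ (deriv z) a)
    (hz'' : DifferentiableAt ℝ (deriv (deriv z)) a) :
    HasDerivAt (surfaceMapDx z w · b)
      ((-√2 * tanh ((a + b) / √2)) • surfaceMapDx z w a b
        + (√2)⁻¹ • ((2 : ℝ) • deriv z a - deriv (deriv (deriv z)) a)) a := by
  have hτ := (((hasDerivAt_id' a).add_const b).div_const √2).tanh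
  have h := ((((hτ.pow 2).const_sub 1).const_mul (√2)⁻¹).smul
    (hz.hasDerivAt.add_const (w b))).add (hτ.smul hz'.hasDerivAt) |>.sub
    (hz''.hasDerivAt.const_smul (√2)⁻¹)
  refine h.congr_deriv ?_
  have hc : √2 * (√2)⁻¹ = 1 := mul_inv_cancel₀ (by positivity)
  have hs : √2 = 2 * (√2)⁻¹ := by field_simp; simp
  simp only [surfaceMapDx, Pi.pow_apply]
  linear_combination (norm := module) (tanh ((a + b) / √2) ^ 2) • hs • deriv z a
    + ((√2)⁻¹ * tanh ((a + b) / √2) * (1 - tanh ((a + b) / √2) ^ 2)) • hs • (z a + w b)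
    - tanh ((a + b) / √2) • hc • deriv (deriv z) a

lemma hasDerivAt_surfaceMapDx_snd (z : ℝ → E) (a : ℝ) {w : ℝ → E} {b : ℝ}
    (hw : DifferentiableAt ℝ w b) :
    HasDerivAt (surfaceMapDx z w a ·)
      (-(1 - tanh ((a + b) / √2) ^ 2) • surfaceMap z w a b) b := by
  have hτ := (((hasDerivAt_id' b).const_add a).div_const √2).tanh
  have h := ((((hτ.pow 2).const_sub 1).const_mul (√2)⁻¹).smul
    (hw.hasDerivAt.const_add (z a))).add (hτ.smul (hasDerivAt_const b (deriv z a))) |>.sub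
    ((hasDerivAt_const b (deriv (deriv z) a)).const_smul (√2)⁻¹)
  refine h.congr_deriv ?_
  have hc : (√2)⁻¹ * (√2)⁻¹ = (2⁻¹ : ℝ) := by rw [← mul_inv, mul_self_sqrt zero_le_two]
  simp only [surfaceMap, Pi.pow_apply]
  linear_combination (norm := module)
    (-2 * tanh ((a + b) / √2) * (1 - tanh ((a + b) / √2) ^ 2)) • hc • (z a + w b)

lemma pd1_pd2_surfaceMap {z w : ℝ → E} {x y : ℝ} (hz : DifferentiableAt ℝ z x)
    (hw : DifferentiableAt ℝ w y) (hw' : DifferentiableAt ℝ (deriv w) y) :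
    pd1 (pd2 (surfaceMap z w)) x y = -(1 - tanh ((x + y) / √2) ^ 2) • surfaceMap z w x y := by
  have h : (pd2 (surfaceMap z w) · y) = surfaceMapDx w z y :=
    funext fun t => (hasDerivAt_surfaceMap_snd z t hw hw').deriv
  rw [pd1, h, (hasDerivAt_surfaceMapDx_snd w y hz).deriv, add_comm y x, surfaceMap_comm]

end Surface

section SurfaceMapPform

variable {s n : ℕ} {I J : Set ℝ} {z w : ℝ → Fin n → ℝ}

lemma pform_surfaceMap_eq_zero {V : Fin n → ℝ} {x y : ℝ}
    (h : √2 * pform s n (z x + w y) V * tanh ((x + y) / √2) =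
      pform s n (deriv z x + deriv w y) V) :
    pform s n (surfaceMap z w x y) V = 0 := by
  rw [surfaceMap, pform_sub_left, pform_smul_left, pform_smul_left, ← h]
  field_simp
  ring

lemma pform_surfaceMapDx_surfaceMap (hI : IsOpen I) (hz : ContDiffOn ℝ 2 z I)
    (h1 : ∀ x ∈ I, ∀ y ∈ J, pform s n (surfaceMap z w x y) (surfaceMap z w x y) = -1)
    {x y : ℝ} (hx : x ∈ I) (hy : y ∈ J) :
    pform s n (surfaceMapDx z w x y) (surfaceMap z w x y) = 0 := by
  have hz' (j : ℕ) (hj : j < 2) := hz.differentiableAt_iterate_deriv hI hj hx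
  have hL := hasDerivAt_surfaceMap_fst (z := z) w y (hz' 0 (by norm_num)) (hz' 1 (by norm_num))
  have h := pform_add_pform_eq_zero_of_eventually_const hL hL
    (eventually_of_mem (hI.mem_nhds hx) fun t ht => h1 t ht y hy)
  rw [pform_comm (surfaceMap z w x y)] at h
  linarith

lemma pform_surfaceMapDx_self (hI : IsOpen I) (hz : ContDiffOn ℝ 3 z I)
    (h1 : ∀ x ∈ I, ∀ y ∈ J, pform s n (surfaceMap z w x y) (surfaceMap z w x y) = -1)
    (h2 : ∀ x ∈ I, ∀ y ∈ J, pform s n (surfaceMap z w x y)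
      ((2 : ℝ) • deriv z x - deriv (deriv (deriv z)) x) = 0)
    {x y : ℝ} (hx : x ∈ I) (hy : y ∈ J) :
    pform s n (surfaceMapDx z w x y) (surfaceMapDx z w x y) = 0 := by
  have hz' (j : ℕ) (hj : j < 3) := hz.differentiableAt_iterate_deriv hI hj hx
  have hL := hasDerivAt_surfaceMap_fst (z := z) w y (hz' 0 (by norm_num)) (hz' 1 (by norm_num))
  have hLx := hasDerivAt_surfaceMapDx_fst (z := z) w y (hz' 0 (by norm_num)) (hz' 1 (by norm_num))
    (hz' 2 (by norm_num))
  have h := pform_add_pform_eq_zero_of_eventually_const hLx hL (eventually_of_mem (hI.mem_nhds hx)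
    fun t ht => pform_surfaceMapDx_surfaceMap hI (hz.of_le (by norm_num)) h1 ht hy)
  rw [pform_add_left, pform_smul_left, pform_smul_left, pform_comm (_ - _), h2 x hx y hy,
    pform_surfaceMapDx_surfaceMap hI (hz.of_le (by norm_num)) h1 hx hy] at h
  simpa using h

lemma pform_surfaceMapDx_surfaceMapDx_swap (hI : IsOpen I) (hJ : IsOpen J)
    (hz : ContDiffOn ℝ 2 z I) (hw : ContDiffOn ℝ 2 w J)
    (h1 : ∀ x ∈ I, ∀ y ∈ J, pform s n (surfaceMap z w x y) (surfaceMap z w x y) = -1)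
    {x y : ℝ} (hx : x ∈ I) (hy : y ∈ J) :
    pform s n (surfaceMapDx z w x y) (surfaceMapDx w z y x) = -(1 - tanh ((x + y) / √2) ^ 2) := by
  have hw' (j : ℕ) (hj : j < 2) := hw.differentiableAt_iterate_deriv hJ hj hy
  have hL := hasDerivAt_surfaceMap_snd z x (w := w) (hw' 0 (by norm_num)) (hw' 1 (by norm_num))
  have hLx := hasDerivAt_surfaceMapDx_snd z x (w := w) (hw' 0 (by norm_num))
  have h := pform_add_pform_eq_zero_of_eventually_const hLx hL (eventually_of_mem (hJ.mem_nhds hy)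
    fun t ht => pform_surfaceMapDx_surfaceMap hI hz h1 hx ht)
  rw [pform_smul_left, h1 x hx y hy] at h
  linarith

end SurfaceMapPform

theorem stmt_15_general (m s : ℕ) (I J : Set ℝ)
    (hIo : IsOpen I) (hJo : IsOpen J)
    (z w : ℝ → Fin (m + 1) → ℝ) (hz : ContDiffOn ℝ 3 z I) (hw : ContDiffOn ℝ 3 w J)
    (L : ℝ → ℝ → Fin (m + 1) → ℝ)
    (hLdef : ∀ x y : ℝ,
      L x y = Real.tanh ((x + y) / Real.sqrt 2) • (z x + w y) -
        (Real.sqrt 2)⁻¹ • (deriv z x + deriv w y))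
    (h1 : ∀ x ∈ I, ∀ y ∈ J, pform (s + 1) (m + 1) (L x y) (L x y) = -1)
    (h2 : ∀ x ∈ I, ∀ y ∈ J,
      Real.sqrt 2 * pform (s + 1) (m + 1) (z x + w y)
          ((2 : ℝ) • deriv z x - deriv (deriv (deriv z)) x) *
        Real.tanh ((x + y) / Real.sqrt 2) =
      pform (s + 1) (m + 1) (deriv z x + deriv w y)
        ((2 : ℝ) • deriv z x - deriv (deriv (deriv z)) x))
    (h3 : ∀ x ∈ I, ∀ y ∈ J,
      Real.sqrt 2 * pform (s + 1) (m + 1) (z x + w y)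
          ((2 : ℝ) • deriv w y - deriv (deriv (deriv w)) y) *
        Real.tanh ((x + y) / Real.sqrt 2) =
      pform (s + 1) (m + 1) (deriv z x + deriv w y)
        ((2 : ℝ) • deriv w y - deriv (deriv (deriv w)) y)) :
    ∀ x ∈ I, ∀ y ∈ J,
      pform (s + 1) (m + 1) (pd1 L x y) (pd1 L x y) = 0 ∧
      pform (s + 1) (m + 1) (pd2 L x y) (pd2 L x y) = 0 ∧
      pform (s + 1) (m + 1) (pd1 L x y) (pd2 L x y) = -(sech ((x + y) / Real.sqrt 2)) ^ 2 ∧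
      pd1 (pd2 L) x y = (-(sech ((x + y) / Real.sqrt 2)) ^ 2) • L x y := by
  obtain rfl : L = surfaceMap z w := funext fun x => funext (hLdef x)
  have h1' (y) (hy : y ∈ J) (x) (hx : x ∈ I) :
      pform (s + 1) (m + 1) (surfaceMap w z y x) (surfaceMap w z y x) = -1 := by
    rw [surfaceMap_comm]
    exact h1 x hx y hy
  have h3' (y) (hy : y ∈ J) (x) (hx : x ∈ I) : pform (s + 1) (m + 1) (surfaceMap w z y x)
      ((2 : ℝ) • deriv w y - deriv (deriv (deriv w)) y) = 0 := by
    rw [surfaceMap_comm]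
    exact pform_surfaceMap_eq_zero (h3 x hx y hy)
  intro x hx y hy
  have hz0 : DifferentiableAt ℝ z x := hz.differentiableAt_iterate_deriv hIo (j := 0) (by simp) hx
  have hz1 : DifferentiableAt ℝ (deriv z) x :=
    hz.differentiableAt_iterate_deriv hIo (j := 1) (by simp) hx
  have hw0 : DifferentiableAt ℝ w y := hw.differentiableAt_iterate_deriv hJo (j := 0) (by simp) hy
  have hw1 : DifferentiableAt ℝ (deriv w) y :=
    hw.differentiableAt_iterate_deriv hJo (j := 1) (by simp) hy
  rw [pd1, (hasDerivAt_surfaceMap_fst w y hz0 hz1).deriv, pd2,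
    (hasDerivAt_surfaceMap_snd z x hw0 hw1).deriv, pd1_pd2_surfaceMap hz0 hw0 hw1, sech_sq]
  exact ⟨pform_surfaceMapDx_self hIo hz h1
      (fun x hx y hy => pform_surfaceMap_eq_zero (h2 x hx y hy)) hx hy,
    pform_surfaceMapDx_self hJo hw h1' h3' hy hx,
    pform_surfaceMapDx_surfaceMapDx_swap hIo hJo (hz.of_le (by norm_num))
      (hw.of_le (by norm_num)) h1 hx hy,
    rfl⟩

theorem stmt_15 (m s : ℕ) (hm : 2 ≤ m) (hs : s ≤ m) (I J : Set ℝ)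
    (hIo : IsOpen I) (hIc : I.OrdConnected) (hJo : IsOpen J) (hJc : J.OrdConnected)
    (z w : ℝ → Fin (m + 1) → ℝ) (hz : ContDiffOn ℝ 3 z I) (hw : ContDiffOn ℝ 3 w J)
    (L : ℝ → ℝ → Fin (m + 1) → ℝ)
    (hLdef : ∀ x y : ℝ,
      L x y = Real.tanh ((x + y) / Real.sqrt 2) • (z x + w y) -
        (Real.sqrt 2)⁻¹ • (deriv z x + deriv w y))
    (h1 : ∀ x ∈ I, ∀ y ∈ J, pform (s + 1) (m + 1) (L x y) (L x y) = -1)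
    (h2 : ∀ x ∈ I, ∀ y ∈ J,
      Real.sqrt 2 * pform (s + 1) (m + 1) (z x + w y)
          ((2 : ℝ) • deriv z x - deriv (deriv (deriv z)) x) *
        Real.tanh ((x + y) / Real.sqrt 2) =
      pform (s + 1) (m + 1) (deriv z x + deriv w y)
        ((2 : ℝ) • deriv z x - deriv (deriv (deriv z)) x))
    (h3 : ∀ x ∈ I, ∀ y ∈ J,
      Real.sqrt 2 * pform (s + 1) (m + 1) (z x + w y)
          ((2 : ℝ) • deriv w y - deriv (deriv (deriv w)) y) *
        Real.tanh ((x + y) / Real.sqrt 2) =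
      pform (s + 1) (m + 1) (deriv z x + deriv w y)
        ((2 : ℝ) • deriv w y - deriv (deriv (deriv w)) y)) :
    ∀ x ∈ I, ∀ y ∈ J,
      pform (s + 1) (m + 1) (pd1 L x y) (pd1 L x y) = 0 ∧
      pform (s + 1) (m + 1) (pd2 L x y) (pd2 L x y) = 0 ∧
      pform (s + 1) (m + 1) (pd1 L x y) (pd2 L x y) = -(sech ((x + y) / Real.sqrt 2)) ^ 2 ∧
      pd1 (pd2 L) x y = (-(sech ((x + y) / Real.sqrt 2)) ^ 2) • L x y :=
  stmt_15_general m s I J hIo hJo z w hz hw L hLdef h1 h2 h3
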